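/- arXiv:1011.5317 — 6 statements merged into one kernel-verified Lean document; each statement's English description precedes it below -/
import Mathlib

section
/- Let Y be a finite nonempty set of schedules, and let w, u : Y → ℝ with w(y) > 0, u(y) > 0, and existence of a constant m > 0 such that w(y) ≥ m·u(y) and w(y) ≤ u(y) for all y ∈ Y. Define π(y) = w(y)/Σ_{z∈Y} w(z) and u* = max_{y∈Y} u(y). Then for any ε ∈ (0,1], the set Z = {y ∈ Y : log u(y) ≥ (1 - ε/2)·log u*} satisfies Σ_{y ∈ Y\Z} π(y) ≤ (|Y|/m)·u*^{-ε/2}. -/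
open Finset

/-! Outside `Z` we have `u y < u* ^ (1 - ε/2)`, while the normalising constant is at least
`w y* ≥ m u*` for a maximiser `y*` of `u`. Hence each term of the sum is at most
`u* ^ (1 - ε/2) / (m u*) = u* ^ (-ε/2) / m`, and there are at most `|Y|` terms. -/

lemma mul_sup'_le_sum {ι : Type*} {s : Finset ι} (hs : s.Nonempty) {w u : ι → ℝ} {m : ℝ}
    (hw : ∀ i ∈ s, 0 ≤ w i) (h : ∀ i ∈ s, m * u i ≤ w i) :
    m * s.sup' hs u ≤ ∑ i ∈ s, w i := by
  obtain ⟨i, hi, hmax⟩ := s.exists_mem_eq_sup' hs u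
  rw [hmax]
  exact (h i hi).trans (single_le_sum hw hi)

lemma div_le_rpow_neg_div {a b m t δ : ℝ} (hm : 0 < m) (hb : 0 < b)
    (ha : a ≤ b ^ (1 - δ)) (ht : m * b ≤ t) :
    a / t ≤ b ^ (-δ) / m := by
  calc a / t ≤ b ^ (1 - δ) / (m * b) :=
        div_le_div₀ (by positivity) ha (by positivity) ht
    _ = b ^ (-δ) / m := by
        rw [sub_eq_neg_add, Real.rpow_add hb, Real.rpow_one]
        field_simp

theorem near_max_weight_prob_bound_general {Y : Type*} [Fintype Y] [Nonempty Y] [DecidableEq Y]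
    (w u : Y → ℝ) (m : ℝ) (hm : 0 < m)
    (hu_one : ∀ y, 1 ≤ u y)
    (h_low : ∀ y, m * u y ≤ w y) (h_up : ∀ y, w y ≤ u y)
    (ε : ℝ) :
    let π : Y → ℝ := fun y => w y / ∑ z, w z
    let ustar : ℝ := univ.sup' univ_nonempty u
    let Z : Finset Y := univ.filter fun y => (1 - ε / 2) * Real.log ustar ≤ Real.log (u y)
    ∑ y ∈ univ \ Z, π y ≤ ((Fintype.card Y : ℝ) / m) * ustar ^ (-(ε / 2)) := by
  intro π ustar Z
  have hu_pos (y : Y) : 0 < u y := one_pos.trans_le (hu_one y)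
  have hustar_pos : 0 < ustar :=
    (hu_pos _).trans_le (le_sup' u (mem_univ (Classical.arbitrary Y)))
  have hw (y : Y) : 0 ≤ w y := (mul_pos hm (hu_pos y)).le.trans (h_low y)
  have htotal : m * ustar ≤ ∑ z, w z :=
    mul_sup'_le_sum univ_nonempty (fun y _ => hw y) (fun y _ => h_low y)
  have hterm : ∀ y ∈ univ \ Z, π y ≤ ustar ^ (-(ε / 2)) / m := by
    intro y hy
    have hlog : Real.log (u y) < (1 - ε / 2) * Real.log ustar := by simpa [Z] using hy
    have hlt := (Real.lt_rpow_iff_log_lt (hu_pos y) hustar_pos).mpr hlog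
    exact div_le_rpow_neg_div hm hustar_pos ((h_up y).trans hlt.le) htotal
  calc ∑ y ∈ univ \ Z, π y ≤ #(univ \ Z) • (ustar ^ (-(ε / 2)) / m) :=
        sum_le_card_nsmul _ _ _ hterm
    _ ≤ Fintype.card Y • (ustar ^ (-(ε / 2)) / m) :=
        nsmul_le_nsmul_left (by positivity) (card_le_univ _)
    _ = ((Fintype.card Y : ℝ) / m) * ustar ^ (-(ε / 2)) := by
        rw [nsmul_eq_mul]
        ring

/-- Schedules of near-maximal weight are selected with high probability:
the probability (under `π ∝ w`) of the set of schedules `y` with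
`log u(y) < (1 - ε/2) log u*` is at most `(|Y|/m) · u*^{-ε/2}`. -/
theorem near_max_weight_prob_bound {Y : Type*} [Fintype Y] [Nonempty Y] [DecidableEq Y]
    (w u : Y → ℝ) (m : ℝ) (hm : 0 < m)
    (hw_pos : ∀ y, 0 < w y) (hu_one : ∀ y, 1 ≤ u y)
    (h_low : ∀ y, m * u y ≤ w y) (h_up : ∀ y, w y ≤ u y)
    (ε : ℝ) (hε : ε ∈ Set.Ioc (0 : ℝ) 1) :
    let π : Y → ℝ := fun y => w y / ∑ z, w z
    let ustar : ℝ := univ.sup' univ_nonempty u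
    let Z : Finset Y := univ.filter fun y => (1 - ε / 2) * Real.log ustar ≤ Real.log (u y)
    ∑ y ∈ univ \ Z, π y ≤ ((Fintype.card Y : ℝ) / m) * ustar ^ (-(ε / 2)) :=
  near_max_weight_prob_bound_general w u m hm hu_one h_low h_up ε
end

section
/- For a continuous-time Markov chain on the set of feasible schedules Y(x) ⊆ {0,1}^{K×J}, with transitions y → y + e_{kj} at rate (x_k - y_k)·ν_k·β_{kj} and y + e_{kj} → y at rate φ_k (whenever y + e_{kj} ∈ Y(x)), the measure w(x,y) = Π_{k : x_k > 0} [x_k!/(x_k - y_k)!]·α_k^{y_k}·Π_j β_{kj}^{y_{kj}}, with α_k = ν_k/φ_k, satisfies the detailed balance equations: w(x,y)·(x_k - y_k)·ν_k·β_{kj} = w(x, y + e_{kj})·φ_k for every y with y + e_{kj} ∈ Y(x). -/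
/-!
Switching channel `j` of class `k` on changes only the factor of class `k` in `w`: its descending
factorial gains the factor `x_k - y_k`, its power of `α_k` one more `α_k = ν_k / φ_k`, and its
`β`-product one more `β_{kj}`. Multiplying by `φ_k` clears the denominator of `α_k`.
-/

open Finset Function

namespace Fintype

variable {ι α M : Type*} [Fintype ι] [DecidableEq ι]

@[to_additive]
theorem prod_mul_eq_prod_update_mul [CommMonoid M] (G : ι → α → M) (y : ι → α) (i : ι) (a : α)
    {c d : M} (h : G i (y i) * c = G i a * d) :
    (∏ k, G k (y k)) * c = (∏ k, G k (update y i a k)) * d := by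
  have hi := mem_univ i
  rw [prod_eq_mul_prod_sdiff_singleton_of_mem hi (fun k => G k (y k)), mul_right_comm, h,
    mul_right_comm]
  simp only [apply_update G y i a, prod_update_of_mem hi]

end Fintype

section ClassWeight

variable {ι : Type*} [Fintype ι] [DecidableEq ι]

noncomputable def classWeight (n : ℕ) (a : ℝ) (b : ι → ℝ) (r : ι → ℕ) : ℝ :=
  (n.descFactorial (∑ j, r j) : ℝ) * a ^ (∑ j, r j) * ∏ j, b j ^ r j

theorem classWeight_mul_eq_classWeight_update {n : ℕ} (a : ℝ) (b : ι → ℝ) {r : ι → ℕ} {i : ι}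
    (hri : r i = 0) (hrn : ∑ j, r j ≤ n) :
    classWeight n a b r * (((n : ℝ) - (∑ j, r j : ℕ)) * a * b i) =
      classWeight n a b (update r i 1) := by
  have hsum : ∑ j, update r i 1 j = ∑ j, r j + 1 := by
    simpa only [add_zero] using (Fintype.sum_add_eq_sum_update_add (fun _ e => e) r i 1
      (c := 1) (d := 0) (by rw [hri])).symm
  have hprod : ∏ j, b j ^ update r i 1 j = (∏ j, b j ^ r j) * b i := by
    simpa only [mul_one] using (Fintype.prod_mul_eq_prod_update_mul (fun j e => b j ^ e) r i 1
      (c := b i) (d := 1) (by rw [hri, pow_zero, pow_one, one_mul, mul_one])).symm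
  rw [classWeight, classWeight, hsum, hprod, Nat.descFactorial_succ, pow_succ,
    Nat.cast_mul, Nat.cast_sub hrn]
  ring

end ClassWeight

theorem csma_detailed_balance_general (K J : ℕ)
    (ν φ α : Fin K → ℝ) (hφ : ∀ k, 0 < φ k)
    (hα : ∀ k, α k = ν k / φ k)
    (β : Fin K → Fin J → ℝ)
    (w : (Fin K → ℕ) → (Fin K → Fin J → ℕ) → ℝ)
    (hw : ∀ x y, w x y = ∏ k, if 0 < x k then
      ((x k).descFactorial (∑ j, y k j) : ℝ) * α k ^ (∑ j, y k j) *
        ∏ j, β k j ^ y k j else 1)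
    (x : Fin K → ℕ) (y : Fin K → Fin J → ℕ)
    (k : Fin K) (j : Fin J)
    (hkj : y k j = 0) (hfeas : ∑ j', y k j' < x k) :
    w x y * ((x k : ℝ) - (∑ j', y k j' : ℕ)) * ν k * β k j =
      w x (Function.update y k (Function.update (y k) j 1)) * φ k := by
  have hxk : 0 < x k := (Nat.zero_le _).trans_lt hfeas
  have hclass : classWeight (x k) (α k) (β k) (y k) *
      (((x k : ℝ) - (∑ j', y k j' : ℕ)) * ν k * β k j) =
      classWeight (x k) (α k) (β k) (update (y k) j 1) * φ k := by
    rw [← classWeight_mul_eq_classWeight_update _ _ hkj hfeas.le, hα]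
    field_simp [(hφ k).ne']
  have hweight := Fintype.prod_mul_eq_prod_update_mul
    (fun k' r => if 0 < x k' then classWeight (x k') (α k') (β k') r else 1) y k
    (update (y k) j 1) (by simpa only [if_pos hxk] using hclass)
  simpa only [hw, classWeight, mul_assoc] using hweight

/-- Detailed balance for the multi-channel CSMA schedule process: the measure
`w(x,y) = ∏_{k: x_k>0} (x_k!/(x_k-y_k)!) α_k^{y_k} ∏_j β_{kj}^{y_{kj}}` satisfies
`w(x,y)·(x_k - y_k)·ν_k·β_{kj} = w(x, y+e_{kj})·φ_k`. -/
theorem csma_detailed_balance (K J : ℕ) (hK : 0 < K) (hJ : 0 < J)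
    (ν φ α : Fin K → ℝ) (hν : ∀ k, 0 < ν k) (hφ : ∀ k, 0 < φ k)
    (hα : ∀ k, α k = ν k / φ k)
    (β : Fin K → Fin J → ℝ) (hβ : ∀ k j, 0 ≤ β k j) (hβsum : ∀ k, ∑ j, β k j = 1)
    (w : (Fin K → ℕ) → (Fin K → Fin J → ℕ) → ℝ)
    (hw : ∀ x y, w x y = ∏ k, if 0 < x k then
      ((x k).descFactorial (∑ j, y k j) : ℝ) * α k ^ (∑ j, y k j) *
        ∏ j, β k j ^ y k j else 1)
    (x : Fin K → ℕ) (y : Fin K → Fin J → ℕ) (hy01 : ∀ k j, y k j ≤ 1)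
    (k : Fin K) (j : Fin J)
    (hkj : y k j = 0) (hfeas : ∑ j', y k j' < x k) :
    w x y * ((x k : ℝ) - (∑ j', y k j' : ℕ)) * ν k * β k j =
      w x (Function.update y k (Function.update (y k) j 1)) * φ k :=
  csma_detailed_balance_general K J ν φ α hφ hα β w hw x y k j hkj hfeas
end

section
/- Define F(x) = Σ_{k : x_k > 0} (x_k σ_k / φ_k) log(x_k α_k) on ℕ^K with σ_k, φ_k, α_k > 0. For the Markov chain with transition rates λ_k from x to x+e_k and φ_k(x)/σ_k from x to x−e_k (when x_k > 0), where 0 ≤ φ_k(x) ≤ J·φ_k, the drift Δ F(x) = Σ_k λ_k (F(x+e_k) − F(x)) + Σ_{k : x_k>0} (φ_k(x)/σ_k)(F(x−e_k) − F(x)) decomposes as Δ F(x) = G(x) + H(x), where G(x) = Σ_{k:x_k>0} ((ρ_k − φ_k(x))/φ_k) log(x_k α_k) with ρ_k = λ_k σ_k, and H is bounded uniformly over x ∈ ℕ^K. -/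
/-!
Each coordinate of `F` is `t ↦ (σ/φ) t log(t α)`, and for `t ≠ 0`
`(t ± 1) log((t ± 1) α) - t log(t α) = ± log(t α) + (t ± 1) log(1 ± 1/t)`.
Weighting the `+` step by `λ` and the `-` step by `φ(x)/σ`, the `log(t α)` terms add up to `G`
and the rest is `H`. `H` is bounded because `log(1 + 1/t) ≤ 1/t` and
`log(1 - 1/t) ≥ -1/(t - 1)`, while `φ(x)/φ ≤ J`.
-/

open Finset Real

theorem Finset.sum_apply_update_sub {ι α M : Type*} [Fintype ι] [DecidableEq ι] [AddCommGroup M]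
    (g : ι → α → M) (x : ι → α) (k : ι) (m : α) :
    ∑ j, g j (Function.update x k m j) - ∑ j, g j (x j) = g k m - g k (x k) := by
  simp_rw [Function.apply_update g, sum_update_of_mem (mem_univ k),
    sum_eq_add_sum_sdiff_singleton_of_mem (mem_univ k) (fun j => g j (x j))]
  abel

theorem Finset.abs_sum_le_univ_sum_of_abs_le {ι α : Type*} [Fintype ι] [AddCommGroup α]
    [LinearOrder α] [IsOrderedAddMonoid α] {s : Finset ι} {f b : ι → α}
    (hf : ∀ i ∈ s, |f i| ≤ b i) (hb : ∀ i, 0 ≤ b i) : |∑ i ∈ s, f i| ≤ ∑ i, b i :=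
  (abs_sum_le_sum_abs f s).trans ((sum_le_sum hf).trans (sum_le_univ_sum_of_nonneg hb))

theorem mul_log_mul_eq_mul_log_div_add (s t a : ℝ) (ht : t ≠ 0) (ha : a ≠ 0) :
    s * log (s * a) = s * log (s / t) + s * log (t * a) := by
  rcases eq_or_ne s 0 with rfl | hs
  · simp
  rw [← mul_add, ← log_mul (by positivity) (by positivity),
    show s / t * (t * a) = s * a by field_simp]

theorem add_one_mul_log_add_one_mul (t a : ℝ) (ht : t ≠ 0) (ha : a ≠ 0) :
    (t + 1) * log ((t + 1) * a) = t * log (t * a) + log (t * a) + (t + 1) * log (1 + 1 / t) := by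
  rw [mul_log_mul_eq_mul_log_div_add _ t a ht ha, add_div, div_self ht]
  ring

theorem sub_one_mul_log_sub_one_mul (t a : ℝ) (ht : t ≠ 0) (ha : a ≠ 0) :
    (t - 1) * log ((t - 1) * a) = t * log (t * a) - log (t * a) + (t - 1) * log (1 - 1 / t) := by
  rw [mul_log_mul_eq_mul_log_div_add _ t a ht ha, sub_div, div_self ht]
  ring

theorem birth_death_drift_mul_log_mul (t a b d : ℝ) (ht : t ≠ 0) (ha : a ≠ 0) :
    b * ((t + 1) * log ((t + 1) * a) - t * log (t * a)) +
        d * ((t - 1) * log ((t - 1) * a) - t * log (t * a)) =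
      (b - d) * log (t * a) +
        (b * (t + 1) * log (1 + 1 / t) + d * (t - 1) * log (1 - 1 / t)) := by
  rw [add_one_mul_log_add_one_mul t a ht ha, sub_one_mul_log_sub_one_mul t a ht ha]
  ring

theorem abs_add_one_mul_log_one_add_inv_le {t : ℝ} (ht : 1 ≤ t) :
    |(t + 1) * log (1 + 1 / t)| ≤ 2 := by
  have ht0 : 0 < t := by linarith
  have hlog : log (1 + 1 / t) ≤ 1 / t := by
    linarith [log_le_sub_one_of_pos (x := 1 + 1 / t) (by positivity)]
  rw [abs_of_nonneg (mul_nonneg (by linarith) (log_nonneg (by simp; positivity)))]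
  calc (t + 1) * log (1 + 1 / t) ≤ (t + 1) * (1 / t) := by gcongr
    _ = 1 + 1 / t := by field_simp
    _ ≤ 2 := by linarith [(div_le_one ht0).2 ht]

theorem abs_sub_one_mul_log_one_sub_inv_le {t : ℝ} (ht : 1 ≤ t) :
    |(t - 1) * log (1 - 1 / t)| ≤ 1 := by
  rcases ht.eq_or_lt with rfl | ht1
  · simp
  have ht0 : 0 < t := by linarith
  have hpos : 0 < 1 - 1 / t := by linarith [(div_lt_one ht0).2 ht1]
  have hlog_ge : -(1 / (t - 1)) ≤ log (1 - 1 / t) := by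
    have e : 1 - (1 - 1 / t)⁻¹ = -(1 / (t - 1)) := by
      field_simp
      ring
    linarith [one_sub_inv_le_log_of_pos hpos]
  have hlog_le : log (1 - 1 / t) ≤ 0 := log_nonpos hpos.le (by linarith [one_div_pos.2 ht0])
  rw [abs_le]
  constructor
  · calc -1 = (t - 1) * -(1 / (t - 1)) := by field_simp
      _ ≤ (t - 1) * log (1 - 1 / t) := by gcongr
  · nlinarith

theorem lyapunov_drift_decomposition_general (K J : ℕ)
    (σ φ α lam : Fin K → ℝ)
    (hσ : ∀ k, 0 < σ k) (hφ : ∀ k, 0 < φ k) (hα : ∀ k, 0 < α k)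
    (ρ : Fin K → ℝ) (hρ : ∀ k, ρ k = lam k * σ k)
    (φx : Fin K → (Fin K → ℕ) → ℝ)
    (hφx : ∀ k x, 0 ≤ φx k x ∧ φx k x ≤ J * φ k)
    (F ΔF G H : (Fin K → ℕ) → ℝ)
    (hF : ∀ x, F x = ∑ k ∈ univ.filter (fun k => 0 < x k),
      (x k : ℝ) * σ k / φ k * log ((x k : ℝ) * α k))
    (hΔF : ∀ x, ΔF x =
      (∑ k, lam k * (F (Function.update x k (x k + 1)) - F x)) +
      ∑ k ∈ univ.filter (fun k => 0 < x k),
        φx k x / σ k * (F (Function.update x k (x k - 1)) - F x))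
    (hG : ∀ x, G x = ∑ k ∈ univ.filter (fun k => 0 < x k),
      (ρ k - φx k x) / φ k * log ((x k : ℝ) * α k))
    (hH : ∀ x, H x =
      (∑ k ∈ univ.filter (fun k => 0 < x k),
        ρ k / φ k * ((x k : ℝ) + 1) * log (1 + 1 / (x k : ℝ))) +
      (∑ k ∈ univ.filter (fun k => 0 < x k),
        φx k x / φ k * ((x k : ℝ) - 1) * log (1 - 1 / (x k : ℝ))) +
      ∑ k ∈ univ.filter (fun k => x k = 0), ρ k / φ k * log (α k)) :
    (∀ x, ΔF x = G x + H x) ∧ ∃ B : ℝ, ∀ x, |H x| ≤ B := by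
  classical
  have hF_univ : ∀ x, F x = ∑ k, σ k / φ k * ((x k : ℝ) * log ((x k : ℝ) * α k)) :=
    fun x => by
      rw [hF, sum_filter_of_ne fun k _ h => Nat.pos_of_ne_zero fun h0 => h (by simp [h0])]
      exact sum_congr rfl fun k _ => by ring
  have hF_update : ∀ x k m, F (Function.update x k m) - F x =
      σ k / φ k * ((m : ℝ) * log (m * α k)) - σ k / φ k * ((x k : ℝ) * log (x k * α k)) :=
    fun x k m => by
      rw [hF_univ, hF_univ,
        sum_apply_update_sub fun k (n : ℕ) => σ k / φ k * ((n : ℝ) * log (n * α k))]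
  have hratio : ∀ k x, |φx k x / φ k| ≤ J := fun k x => by
    rw [abs_of_nonneg (div_nonneg (hφx k x).1 (hφ k).le), div_le_iff₀ (hφ k)]
    exact (hφx k x).2
  refine ⟨fun x => ?_, ⟨∑ k, |ρ k / φ k| * 2 + ∑ _ : Fin K, (J : ℝ) * 1 +
    ∑ k, |ρ k / φ k * log (α k)|, fun x => ?_⟩⟩
  · rw [hΔF, hG, hH]
    simp only [hF_update, sum_filter, ← sum_add_distrib]
    refine sum_congr rfl fun k _ => ?_
    rcases (x k).eq_zero_or_pos with h0 | hpos
    · simp only [h0, zero_add, Nat.cast_one, one_mul, CharP.cast_eq_zero, zero_mul, log_zero,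
        mul_zero, sub_zero, lt_self_iff_false, ↓reduceIte, add_zero, hρ]
      ring
    · have hx : (x k : ℝ) ≠ 0 := by positivity
      simp only [hpos, hpos.ne', if_true, if_false]
      push_cast [Nat.cast_sub hpos]
      rw [hρ, ← mul_sub, ← mul_sub, ← mul_assoc (φx k x / σ k),
        div_mul_div_cancel₀ (hσ k).ne']
      linear_combination (φ k)⁻¹ *
        birth_death_drift_mul_log_mul _ _ (lam k * σ k) (φx k x) hx (hα k).ne'
  · have hone : ∀ k ∈ univ.filter (fun k => 0 < x k), (1 : ℝ) ≤ x k :=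
      fun k hk => Nat.one_le_cast.2 (mem_filter.1 hk).2
    rw [hH]
    refine (abs_add_three _ _ _).trans (add_le_add_three ?_ ?_ ?_)
    · refine abs_sum_le_univ_sum_of_abs_le (fun k hk => ?_) (fun k => by positivity)
      rw [mul_assoc, abs_mul]
      exact mul_le_mul_of_nonneg_left (abs_add_one_mul_log_one_add_inv_le (hone k hk))
        (abs_nonneg _)
    · refine abs_sum_le_univ_sum_of_abs_le (fun k hk => ?_) (fun k => by positivity)
      rw [mul_assoc, abs_mul]
      exact mul_le_mul (hratio k x) (abs_sub_one_mul_log_one_sub_inv_le (hone k hk))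
        (abs_nonneg _) (by positivity)
    · exact abs_sum_le_univ_sum_of_abs_le (fun _ _ => le_rfl) (fun _ => abs_nonneg _)

/-- Drift decomposition for the Lyapunov function
`F(x) = Σ_{k:x_k>0} (x_k σ_k/φ_k) log(x_k α_k)`: the drift `ΔF` decomposes as
`ΔF = G + H`, where `G(x) = Σ_{k:x_k>0} ((ρ_k - φ_k(x))/φ_k) log(x_k α_k)` and
`H` is bounded uniformly over all states. -/
theorem lyapunov_drift_decomposition (K J : ℕ) (hK : 0 < K) (hJ : 0 < J)
    (σ φ α lam : Fin K → ℝ)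
    (hσ : ∀ k, 0 < σ k) (hφ : ∀ k, 0 < φ k) (hα : ∀ k, 0 < α k)
    (hlam : ∀ k, 0 < lam k)
    (ρ : Fin K → ℝ) (hρ : ∀ k, ρ k = lam k * σ k)
    (φx : Fin K → (Fin K → ℕ) → ℝ)
    (hφx : ∀ k x, 0 ≤ φx k x ∧ φx k x ≤ J * φ k)
    (F ΔF G H : (Fin K → ℕ) → ℝ)
    (hF : ∀ x, F x = ∑ k ∈ univ.filter (fun k => 0 < x k),
      (x k : ℝ) * σ k / φ k * log ((x k : ℝ) * α k))
    (hΔF : ∀ x, ΔF x =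
      (∑ k, lam k * (F (Function.update x k (x k + 1)) - F x)) +
      ∑ k ∈ univ.filter (fun k => 0 < x k),
        φx k x / σ k * (F (Function.update x k (x k - 1)) - F x))
    (hG : ∀ x, G x = ∑ k ∈ univ.filter (fun k => 0 < x k),
      (ρ k - φx k x) / φ k * log ((x k : ℝ) * α k))
    (hH : ∀ x, H x =
      (∑ k ∈ univ.filter (fun k => 0 < x k),
        ρ k / φ k * ((x k : ℝ) + 1) * log (1 + 1 / (x k : ℝ))) +
      (∑ k ∈ univ.filter (fun k => 0 < x k),
        φx k x / φ k * ((x k : ℝ) - 1) * log (1 - 1 / (x k : ℝ))) +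
      ∑ k ∈ univ.filter (fun k => x k = 0), ρ k / φ k * log (α k)) :
    (∀ x, ΔF x = G x + H x) ∧ ∃ B : ℝ, ∀ x, |H x| ≤ B :=
  lyapunov_drift_decomposition_general K J σ φ α lam hσ hφ hα ρ hρ φx hφx F ΔF G H hF hΔF hG hH
end

section
/- For ρ_1 ∈ (0,1), define f(ρ_1) = (1/3)ρ_1^4 − (2/3)ρ_1^3 − (2/3)ρ_1^2 + 1. Then f(ρ_1) < 1 for all ρ_1 ∈ (0,1), and in the homogeneous case the equation ρ = f(ρ) has a unique solution ρ* ∈ (0,1) with ρ* < 2/3; moreover f(0.63) < 0.63, so any ρ_1 = ρ_3 > 0.63 satisfies ρ_3 > f(ρ_1). -/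
/-! The polynomial `f` has derivative `(2/3) x (2x + 1)(x - 2)`, so it is strictly decreasing
on `[0, 2]`, and so is `f x - x`. Since `f 0 - 0 = 1 > 0 > -1 = f 1 - 1`, the intermediate value
theorem gives exactly one fixed point in `(0, 1)`. A direct evaluation gives `f 0.63 < 0.63`,
and monotonicity propagates this to every `ρ ∈ [0.63, 2]`; in particular the fixed point lies
below `0.63 < 2/3`. -/

open Set

noncomputable def bowTie (x : ℝ) : ℝ := (1 / 3) * x ^ 4 - (2 / 3) * x ^ 3 - (2 / 3) * x ^ 2 + 1

theorem hasDerivAt_bowTie (x : ℝ) :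
    HasDerivAt bowTie ((2 / 3) * x * (2 * x + 1) * (x - 2)) x := by
  have h := ((((hasDerivAt_pow 4 x).const_mul (1 / 3)).sub
    ((hasDerivAt_pow 3 x).const_mul (2 / 3))).sub
    ((hasDerivAt_pow 2 x).const_mul (2 / 3))).add_const 1
  exact h.congr_deriv (by norm_num; ring)

theorem bowTie_zero : bowTie 0 = 1 := by norm_num [bowTie]

theorem continuous_bowTie : Continuous bowTie := by
  unfold bowTie; fun_prop

theorem strictAntiOn_bowTie : StrictAntiOn bowTie (Icc 0 2) := by
  refine strictAntiOn_of_deriv_neg (convex_Icc 0 2) continuous_bowTie.continuousOn ?_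
  rw [interior_Icc]
  rintro x ⟨hx0, hx2⟩
  rw [(hasDerivAt_bowTie x).deriv]
  have : 0 < (2 / 3) * x * (2 * x + 1) := by positivity
  exact mul_neg_of_pos_of_neg this (by linarith)

theorem strictAntiOn_bowTie_sub_id : StrictAntiOn (fun x ↦ bowTie x - x) (Icc 0 2) :=
  strictAntiOn_bowTie.add fun _ _ _ _ hab ↦ neg_lt_neg hab

theorem bowTie_lt_self_of_le {x : ℝ} (hx : 0.63 ≤ x) (hx2 : x ≤ 2) : bowTie x < x := by
  have hmem : (0.63 : ℝ) ∈ Icc 0 2 := by norm_num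
  calc bowTie x ≤ bowTie 0.63 :=
        strictAntiOn_bowTie.antitoneOn hmem ⟨by linarith, hx2⟩ hx
    _ < 0.63 := by norm_num [bowTie]
    _ ≤ x := hx

theorem existsUnique_bowTie_eq_self : ∃! x, x ∈ Ioo (0 : ℝ) 1 ∧ bowTie x = x := by
  have hIcc : Icc (0 : ℝ) 1 ⊆ Icc 0 2 := Icc_subset_Icc_right one_le_two
  obtain ⟨x, hx, hfix⟩ : (0 : ℝ) ∈ (fun x ↦ bowTie x - x) '' Ioo 0 1 :=
    intermediate_value_Ioo' zero_le_one
      (continuous_bowTie.sub continuous_id).continuousOn (by norm_num [bowTie])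
  refine ⟨x, ⟨hx, sub_eq_zero.mp hfix⟩, fun y ⟨hy, hyfix⟩ ↦ ?_⟩
  refine strictAntiOn_bowTie_sub_id.injOn (hIcc (Ioo_subset_Icc_self hy))
    (hIcc (Ioo_subset_Icc_self hx)) ?_
  simp only [hyfix, sub_self, hfix]

/-- Properties of the bow-tie saturated throughput polynomial
`f(ρ) = (1/3)ρ⁴ − (2/3)ρ³ − (2/3)ρ² + 1`: it is below 1 on (0,1), the equation
`ρ = f(ρ)` has a unique solution in (0,1), which is below 2/3; moreover
`f(0.63) < 0.63`, so every `ρ ∈ (0.63, 1]` satisfies `ρ > f(ρ)`. -/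
theorem bow_tie_polynomial_properties
    (f : ℝ → ℝ)
    (hf : ∀ x, f x = (1 / 3) * x ^ 4 - (2 / 3) * x ^ 3 - (2 / 3) * x ^ 2 + 1) :
    (∀ ρ ∈ Set.Ioo (0 : ℝ) 1, f ρ < 1) ∧
    (∃! ρstar : ℝ, ρstar ∈ Set.Ioo (0 : ℝ) 1 ∧ f ρstar = ρstar) ∧
    (∀ ρstar ∈ Set.Ioo (0 : ℝ) 1, f ρstar = ρstar → ρstar < 2 / 3) ∧
    f 0.63 < 0.63 ∧
    (∀ ρ : ℝ, 0.63 < ρ → ρ ≤ 1 → f ρ < ρ) := by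
  obtain rfl : f = bowTie := funext hf
  have lt_self_of_le : ∀ ρ : ℝ, 0.63 ≤ ρ → ρ ≤ 1 → bowTie ρ < ρ :=
    fun ρ h63 h1 ↦ bowTie_lt_self_of_le h63 (by linarith)
  refine ⟨fun ρ ⟨h0, h1⟩ ↦ ?_, existsUnique_bowTie_eq_self, fun ρ ⟨_, h1⟩ hfix ↦ ?_,
    lt_self_of_le 0.63 le_rfl (by norm_num), fun ρ h63 h1 ↦ lt_self_of_le ρ h63.le h1⟩
  · exact (strictAntiOn_bowTie ⟨le_rfl, zero_le_two⟩ ⟨h0.le, by linarith⟩ h0).trans_eq bowTie_zero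
  · by_contra! h23
    exact (lt_self_of_le ρ (by linarith) h1.le).ne hfix
end

section
/- For the L-partite network, the capacity region equals {φ ∈ ℝ_{≥0}^K : Σ_{l=1}^L max_{k ∈ C_l} (φ_k/φ̄_k) ≤ J}. -/
/-!
Necessity: averaging the channel counts `n_l` that witness the feasibility of each schedule gives
numbers `M_l` with `Σ M_l ≤ J` and `φ_k / φ̄_k ≤ M_l` on `C_l`.

Sufficiency: with `x_k = φ_k / φ̄_k` and `M_l = max_{k ∈ C_l} x_k`, lay the parts side by side
on `[0, Σ M_l) ⊆ [0, J)`, part `l` on a block of length `M_l` and class `k` on the initial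
segment of length `x_k` of its part's block. For a shift `u ∈ [0, 1)`, give each class one
channel per point of `u + ℤ` in its segment. The blocks are disjoint, so this is a feasible
schedule, and for uniform `u` class `k` gets `x_k` channels on average. The law of this random
schedule is the required probability measure on schedules.
-/

open Finset MeasureTheory

theorem Fin.sum_succ_sub_castSucc {G : Type*} [AddCommGroup G] {n : ℕ} (f : Fin (n + 1) → G) :
    ∑ i : Fin n, (f i.succ - f i.castSucc) = f (Fin.last n) - f 0 := by
  rw [sum_sub_distrib, sub_eq_sub_iff_add_eq_add, add_comm, ← Fin.sum_univ_succ,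
    add_comm (f (Fin.last n)), ← Fin.sum_univ_castSucc]

theorem Fin.partialSum_last {M : Type*} [AddCommMonoid M] {n : ℕ} (f : Fin n → M) :
    Fin.partialSum f (Fin.last n) = ∑ i, f i := by
  simp [Fin.partialSum, List.take_of_length_le, List.sum_ofFn]

instance : IsProbabilityMeasure (volume.restrict (Set.Ico (0 : ℝ) 1)) :=
  ⟨by simp⟩

theorem ceil_sub_eqOn_Ico (c : ℝ) :
    Set.EqOn (fun u => (⌈c - u⌉ : ℝ)) (fun u => ⌊c⌋ + (Set.Iio (Int.fract c)).indicator 1 u)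
      (Set.Ico 0 1) := by
  intro u ⟨hu₀, hu₁⟩
  have hc := Int.floor_add_fract c
  have ht₀ := Int.fract_nonneg c
  have ht₁ := Int.fract_lt_one c
  by_cases hu : u < Int.fract c
  · simp only [Set.indicator_of_mem (Set.mem_Iio.2 hu), Pi.one_apply]
    exact_mod_cast Int.ceil_eq_iff.2 ⟨by push_cast; linarith, by push_cast; linarith⟩
  · simp only [Set.indicator_of_notMem (fun h => hu (Set.mem_Iio.1 h)), add_zero]
    exact_mod_cast Int.ceil_eq_iff.2 ⟨by linarith, by linarith⟩

theorem integrableOn_ceil_sub (c : ℝ) :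
    IntegrableOn (fun u => (⌈c - u⌉ : ℝ)) (Set.Ico 0 1) := by
  have h : IntegrableOn (fun u => (⌊c⌋ : ℝ) + (Set.Iio (Int.fract c)).indicator 1 u)
      (Set.Ico 0 1) :=
    (integrable_const _).add ((integrable_const (1 : ℝ)).indicator measurableSet_Iio)
  exact h.congr_fun (ceil_sub_eqOn_Ico c).symm measurableSet_Ico

theorem integral_ceil_sub (c : ℝ) : ∫ u in Set.Ico (0 : ℝ) 1, (⌈c - u⌉ : ℝ) = c := by
  rw [setIntegral_congr_fun measurableSet_Ico (ceil_sub_eqOn_Ico c), integral_add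
    (integrable_const _) ((integrable_const 1).indicator measurableSet_Iio),
    integral_indicator_one measurableSet_Iio, measureReal_restrict_apply measurableSet_Iio,
    Set.inter_comm, Set.Ico_inter_Iio, min_eq_right (Int.fract_lt_one c).le]
  simp [Int.fract_nonneg]

-- The number of points of `u + ℤ` in `[a, b)`.
noncomputable def latticeCount (a b u : ℝ) : ℤ := ⌈b - u⌉ - ⌈a - u⌉

theorem latticeCount_nonneg {a b : ℝ} (h : a ≤ b) (u : ℝ) : 0 ≤ latticeCount a b u :=
  sub_nonneg.2 (Int.ceil_mono (by linarith))

theorem latticeCount_mono_right {a b b' : ℝ} (h : b ≤ b') (u : ℝ) :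
    latticeCount a b u ≤ latticeCount a b' u :=
  sub_le_sub_right (Int.ceil_mono (by linarith)) _

theorem latticeCount_add_intCast (a : ℝ) (n : ℤ) (u : ℝ) : latticeCount a (a + n) u = n := by
  simp [latticeCount, add_sub_right_comm, Int.ceil_add_intCast]

theorem measurable_latticeCount (a b : ℝ) : Measurable (latticeCount a b) := by
  unfold latticeCount
  fun_prop

theorem integral_latticeCount (a b : ℝ) :
    ∫ u in Set.Ico (0 : ℝ) 1, (latticeCount a b u : ℝ) = b - a := by
  simp only [latticeCount, Int.cast_sub]
  rw [integral_sub (integrableOn_ceil_sub b) (integrableOn_ceil_sub a), integral_ceil_sub,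
    integral_ceil_sub]

theorem sum_latticeCount_partialSum {L : ℕ} (M : Fin L → ℝ) (u : ℝ) :
    ∑ l : Fin L, latticeCount (Fin.partialSum M l.castSucc) (Fin.partialSum M l.succ) u =
      latticeCount 0 (∑ l, M l) u := by
  simpa [latticeCount, Fin.partialSum_last] using
    Fin.sum_succ_sub_castSucc fun i => ⌈Fin.partialSum M i - u⌉

theorem exists_weights_integral_eq {α ι : Type*} [MeasurableSpace α] [Countable ι]
    (μ : Measure α) [IsProbabilityMeasure μ] (Y : Finset (ι → ℕ)) {g : α → ι → ℕ}
    (hg : Measurable g) (hgY : ∀ a, g a ∈ Y) :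
    ∃ π : (ι → ℕ) → ℝ, (∀ y ∈ Y, 0 ≤ π y) ∧ ∑ y ∈ Y, π y = 1 ∧
      ∀ k, ∑ y ∈ Y, π y * y k = ∫ a, (g a k : ℝ) ∂μ := by
  have hfiber : ∀ y, MeasurableSet (g ⁻¹' {y}) := fun y => hg (measurableSet_singleton y)
  refine ⟨fun y => μ.real (g ⁻¹' {y}), fun y _ => measureReal_nonneg, ?_, fun k => ?_⟩
  · rw [sum_measureReal_preimage_singleton Y fun y _ => hfiber y,
      Set.preimage_eq_univ_iff.2 fun y ⟨a, ha⟩ => ha ▸ hgY a, probReal_univ]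
  · have hsplit : (fun a => (g a k : ℝ)) =
        fun a => ∑ y ∈ Y, (g ⁻¹' {y}).indicator (fun _ => (y k : ℝ)) a := by
      ext a
      rw [sum_eq_single_of_mem (g a) (hgY a)
        fun y _ hy => Set.indicator_of_notMem (s := g ⁻¹' {y}) hy.symm _]
      simp
    rw [hsplit, integral_finsetSum _ fun y _ => (integrable_const _).indicator (hfiber y)]
    simp_rw [integral_indicator_const _ (hfiber _), smul_eq_mul]

section RoundedSchedule

variable {ι : Type*} {L J : ℕ} (parts : ι → Fin L) (M : Fin L → ℝ) (x : ι → ℝ)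

-- Part `l` occupies the block `[P l, P (l + 1))` with `P = Fin.partialSum M`, and class `k`
-- the initial segment of length `x k` of the block of its part.
noncomputable def roundedSchedule (u : ℝ) (k : ι) : ℕ :=
  (latticeCount (Fin.partialSum M (parts k).castSucc)
    (Fin.partialSum M (parts k).castSucc + x k) u).toNat

theorem measurable_roundedSchedule : Measurable (roundedSchedule parts M x) :=
  measurable_pi_lambda _ fun _ =>
    (measurable_of_countable Int.toNat).comp (measurable_latticeCount _ _)

theorem roundedSchedule_feasible (hM₀ : ∀ l, 0 ≤ M l) (hxM : ∀ k, x k ≤ M (parts k))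
    (hMJ : ∑ l, M l ≤ J) (u : ℝ) :
    ∃ n : Fin L → ℕ, ∑ l, n l ≤ J ∧ ∀ k, roundedSchedule parts M x u k ≤ n (parts k) := by
  have hblock : ∀ l : Fin L, Fin.partialSum M l.castSucc ≤ Fin.partialSum M l.succ :=
    fun l => by
      rw [Fin.partialSum_succ]
      linarith [hM₀ l]
  refine ⟨fun l => (latticeCount (Fin.partialSum M l.castSucc) (Fin.partialSum M l.succ) u).toNat,
    ?_, fun k => Int.toNat_le_toNat (latticeCount_mono_right ?_ u)⟩
  · have hsum : ((∑ l : Fin L, (latticeCount (Fin.partialSum M l.castSucc)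
        (Fin.partialSum M l.succ) u).toNat : ℕ) : ℤ) = latticeCount 0 (∑ l, M l) u := by
      push_cast [Int.toNat_of_nonneg (latticeCount_nonneg (hblock _) u)]
      exact sum_latticeCount_partialSum M u
    have hJ : latticeCount 0 (∑ l, M l) u ≤ J :=
      calc latticeCount 0 (∑ l, M l) u ≤ latticeCount 0 (0 + (J : ℤ)) u :=
            latticeCount_mono_right (by simpa using hMJ) u
        _ = J := latticeCount_add_intCast 0 J u
    exact_mod_cast hsum.trans_le hJ
  · rw [Fin.partialSum_succ]
    linarith [hxM k]

theorem integral_roundedSchedule {k : ι} (hx₀ : 0 ≤ x k) :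
    ∫ u in Set.Ico (0 : ℝ) 1, (roundedSchedule parts M x u k : ℝ) = x k := by
  have hcast : ∀ u, (roundedSchedule parts M x u k : ℝ) =
      latticeCount (Fin.partialSum M (parts k).castSucc)
        (Fin.partialSum M (parts k).castSucc + x k) u := fun u => by
    exact_mod_cast Int.toNat_of_nonneg (latticeCount_nonneg (by linarith) u)
  simp_rw [hcast, integral_latticeCount, add_sub_cancel_left]

end RoundedSchedule

theorem exists_weights_of_sum_le {ι : Type*} [Countable ι] {L J : ℕ}
    (parts : ι → Fin L) (Y : Finset (ι → ℕ))
    (hY : ∀ y, (∃ n : Fin L → ℕ, ∑ l, n l ≤ J ∧ ∀ k, y k ≤ n (parts k)) → y ∈ Y)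
    {x : ι → ℝ} {M : Fin L → ℝ} (hx₀ : ∀ k, 0 ≤ x k) (hM₀ : ∀ l, 0 ≤ M l)
    (hxM : ∀ k, x k ≤ M (parts k)) (hMJ : ∑ l, M l ≤ J) :
    ∃ π : (ι → ℕ) → ℝ, (∀ y ∈ Y, 0 ≤ π y) ∧ ∑ y ∈ Y, π y = 1 ∧
      ∀ k, x k = ∑ y ∈ Y, π y * y k := by
  obtain ⟨π, hπ₀, hπ₁, hπx⟩ := exists_weights_integral_eq (volume.restrict (Set.Ico (0 : ℝ) 1))
    Y (measurable_roundedSchedule parts M x)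
    fun u => hY _ (roundedSchedule_feasible parts M x hM₀ hxM hMJ u)
  exact ⟨π, hπ₀, hπ₁, fun k => by rw [hπx, integral_roundedSchedule parts M x (hx₀ k)]⟩

theorem exists_sum_le_of_weights {ι κ : Type*} [Fintype κ] {J : ℕ} (parts : ι → κ)
    (Y : Finset (ι → ℕ)) (hY : ∀ y ∈ Y, ∃ n : κ → ℕ, ∑ l, n l ≤ J ∧ ∀ k, y k ≤ n (parts k))
    {π : (ι → ℕ) → ℝ} (hπ₀ : ∀ y ∈ Y, 0 ≤ π y) (hπ₁ : ∑ y ∈ Y, π y = 1)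
    {x : ι → ℝ} (hx : ∀ k, x k = ∑ y ∈ Y, π y * y k) :
    (∀ k, 0 ≤ x k) ∧ ∃ M : κ → ℝ, ∑ l, M l ≤ J ∧ ∀ k, x k ≤ M (parts k) := by
  choose! n hnJ hn using hY
  refine ⟨fun k => (hx k).symm ▸ sum_nonneg fun y hy => mul_nonneg (hπ₀ y hy) (by positivity),
    fun l => ∑ y ∈ Y, π y * n y l, ?_, fun k => ?_⟩
  · calc ∑ l, ∑ y ∈ Y, π y * (n y l : ℝ)
        = ∑ y ∈ Y, π y * ((∑ l, n y l : ℕ) : ℝ) := by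
          rw [sum_comm]
          push_cast [mul_sum]
          rfl
      _ ≤ ∑ y ∈ Y, π y * J := sum_le_sum fun y hy =>
          mul_le_mul_of_nonneg_left (by exact_mod_cast hnJ y hy) (hπ₀ y hy)
      _ = J := by rw [← sum_mul, hπ₁, one_mul]
  · rw [hx k]
    exact sum_le_sum fun y hy =>
      mul_le_mul_of_nonneg_left (by exact_mod_cast hn y hy k) (hπ₀ y hy)

/-- Capacity region of an `L`-partite network with `J` channels: the set of
throughput vectors achievable by randomizing over feasible schedules is exactly
`{φ ≥ 0 : Σ_l max_{k ∈ C_l} φ_k/φ̄_k ≤ J}`. -/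
theorem Lpartite_capacity_region (K L J : ℕ)
    (parts : Fin K → Fin L) (hsurj : Function.Surjective parts)
    (φbar : Fin K → ℝ) (hφbar : ∀ k, 0 < φbar k)
    -- the finite set of feasible schedules
    (Y : Finset (Fin K → ℕ))
    (hY : ∀ y : Fin K → ℕ, y ∈ Y ↔ ∃ n : Fin L → ℕ,
      (∑ l, n l ≤ J) ∧ ∀ k, y k ≤ n (parts k)) :
    {φ : Fin K → ℝ | ∃ π : (Fin K → ℕ) → ℝ, (∀ y ∈ Y, 0 ≤ π y) ∧
        (∑ y ∈ Y, π y = 1) ∧ ∀ k, φ k = φbar k * ∑ y ∈ Y, π y * (y k : ℝ)} =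
    {φ : Fin K → ℝ | (∀ k, 0 ≤ φ k) ∧
      ∑ l : Fin L, (univ.filter (fun k => parts k = l)).sup'
        (by
          obtain ⟨k, hk⟩ := hsurj l
          exact ⟨k, by simp [hk]⟩)
        (fun k => φ k / φbar k) ≤ J} := by
  have hne : ∀ l, (univ.filter fun k => parts k = l).Nonempty := fun l => by
    obtain ⟨k, rfl⟩ := hsurj l
    exact ⟨k, by simp⟩
  have hmem : ∀ k, k ∈ univ.filter (fun k' => parts k' = parts k) := fun k => by simp
  ext φ
  have hscale : ∀ k s, φ k = φbar k * s ↔ φ k / φbar k = s := fun k s => by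
    rw [div_eq_iff (hφbar k).ne', mul_comm]
  have hnonneg : (∀ k, 0 ≤ φ k) ↔ ∀ k, 0 ≤ φ k / φbar k :=
    forall_congr' fun k => by rw [le_div_iff₀ (hφbar k), zero_mul]
  simp only [Set.mem_ofPred_eq, hscale, hnonneg]
  constructor
  · rintro ⟨π, hπ₀, hπ₁, hπx⟩
    obtain ⟨hx₀, M, hMJ, hxM⟩ := exists_sum_le_of_weights parts Y (fun y => (hY y).1)
      hπ₀ hπ₁ (x := fun k => φ k / φbar k) hπx
    refine ⟨hx₀, (sum_le_sum fun l _ => sup'_le _ _ fun k hk => ?_).trans hMJ⟩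
    exact (mem_filter.1 hk).2 ▸ hxM k
  · rintro ⟨hx₀, hsum⟩
    have hM₀ : ∀ l, 0 ≤ (univ.filter fun k => parts k = l).sup' (hne l) fun k => φ k / φbar k :=
      fun l => by
        obtain ⟨k, rfl⟩ := hsurj l
        exact (hx₀ k).trans (le_sup' (fun k => φ k / φbar k) (hmem k))
    exact exists_weights_of_sum_le parts Y (fun y => (hY y).2) (x := fun k => φ k / φbar k)
      hx₀ hM₀ (fun k => le_sup' (fun k => φ k / φbar k) (hmem k)) hsum
end

section
/- Uniform weight approximation: there exists a constant m > 0 (depending on J, K, and β) such that for all x ∈ ℕ^K and all feasible schedules y ∈ Y(x), m·u(x,y) ≤ w(x,y) ≤ u(x,y), where w(x,y) = Π_{k:x_k>0} (x_k!/(x_k−y_k)!)·α_k^{y_k}·Π_j β_{kj}^{y_{kj}} and u(x,y) = Π_{k:x_k>0} (x_k α_k)^{y_k}. -/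
/-!
Both bounds hold class by class. Above, `x!/(x-n)! ≤ x^n` and `β ≤ 1`. Below, with `n ≤ J`,
`x^n ≤ n! · x!/(x-n)! ≤ J! · x!/(x-n)!`, and since a schedule uses each accessible channel at
most once, `∏_j β_j^{y_j} ≥ ∏_{j ∈ V} β_j > 0`. So `m = ∏_k (∏_{j ∈ V_k} β_{kj}) / J!` works.
-/

open Finset Nat

theorem Nat.pow_le_factorial_mul_descFactorial {x : ℕ} : ∀ {n : ℕ}, n ≤ x →
    x ^ n ≤ n ! * x.descFactorial n
  | 0, _ => by simp
  | n + 1, h => by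
    -- each factor `x - i` of the falling factorial is at least `x / (i + 1)`
    have hx : x ≤ (n + 1) * (x - n) := by
      obtain ⟨t, rfl⟩ := Nat.exists_eq_add_of_le h
      rw [show n + 1 + t - n = 1 + t by omega]
      nlinarith
    calc x ^ (n + 1) = x ^ n * x := pow_succ x n
      _ ≤ (n ! * x.descFactorial n) * ((n + 1) * (x - n)) :=
          Nat.mul_le_mul (pow_le_factorial_mul_descFactorial (by omega)) hx
      _ = (n + 1)! * x.descFactorial (n + 1) := by
          rw [factorial_succ, descFactorial_succ]; ring

theorem Finset.prod_le_prod_pow_of_le_one {ι : Type*} [Fintype ι] {β : ι → ℝ} {y : ι → ℕ}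
    {V : Finset ι} (hβ : ∀ j ∈ V, 0 ≤ β j ∧ β j ≤ 1) (hy1 : ∀ j, y j ≤ 1)
    (hyV : ∀ j, y j = 1 → j ∈ V) :
    ∏ j ∈ V, β j ≤ ∏ j, β j ^ y j :=
  calc ∏ j ∈ V, β j
      ≤ ∏ j ∈ V, β j ^ y j := prod_le_prod (fun j hj => (hβ j hj).1) fun j hj => by
        simpa using pow_le_pow_of_le_one (hβ j hj).1 (hβ j hj).2 (hy1 j)
    _ = ∏ j, β j ^ y j := prod_subset (subset_univ V) fun j _ hj => by
        have : y j = 0 := by have := hy1 j; have := mt (hyV j) hj; omega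
        simp [this]

section ClassFactors

variable {ι : Type*} [Fintype ι]

noncomputable def weightFactor (x : ℕ) (a : ℝ) (β : ι → ℝ) (y : ι → ℕ) : ℝ :=
  if 0 < x then (x.descFactorial (∑ j, y j) : ℝ) * a ^ (∑ j, y j) * ∏ j, β j ^ y j else 1

noncomputable def approxFactor (x : ℕ) (a : ℝ) (y : ι → ℕ) : ℝ :=
  if 0 < x then ((x : ℝ) * a) ^ (∑ j, y j) else 1

variable {x : ℕ} {a : ℝ} {β : ι → ℝ} {y : ι → ℕ}

theorem prod_pow_le_one (hβ : ∀ j, 0 ≤ β j ∧ β j ≤ 1) : ∏ j, β j ^ y j ≤ 1 :=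
  prod_le_one (fun j _ => pow_nonneg (hβ j).1 _) fun j _ => pow_le_one₀ (hβ j).1 (hβ j).2

theorem approxFactor_nonneg (ha : 0 ≤ a) : 0 ≤ approxFactor x a y := by
  unfold approxFactor; split_ifs <;> positivity

theorem weightFactor_nonneg (ha : 0 ≤ a) (hβ : ∀ j, 0 ≤ β j) : 0 ≤ weightFactor x a β y := by
  unfold weightFactor
  split_ifs
  · exact mul_nonneg (by positivity) (prod_nonneg fun j _ => pow_nonneg (hβ j) _)
  · exact zero_le_one

theorem weightFactor_le_approxFactor (ha : 0 ≤ a) (hβ : ∀ j, 0 ≤ β j ∧ β j ≤ 1) :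
    weightFactor x a β y ≤ approxFactor x a y := by
  unfold weightFactor approxFactor
  split_ifs
  · have hdesc : (x.descFactorial (∑ j, y j) : ℝ) ≤ (x : ℝ) ^ (∑ j, y j) := by
      exact_mod_cast descFactorial_le_pow _ _
    calc (x.descFactorial (∑ j, y j) : ℝ) * a ^ (∑ j, y j) * ∏ j, β j ^ y j
        ≤ (x : ℝ) ^ (∑ j, y j) * a ^ (∑ j, y j) * 1 := by
          gcongr
          · exact prod_nonneg fun j _ => pow_nonneg (hβ j).1 _
          · exact prod_pow_le_one hβ
      _ = ((x : ℝ) * a) ^ (∑ j, y j) := by rw [mul_one, mul_pow]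
  · exact le_rfl

theorem mul_approxFactor_le_weightFactor {V : Finset ι} (ha : 0 ≤ a)
    (hβ : ∀ j, 0 ≤ β j ∧ β j ≤ 1) (hy1 : ∀ j, y j ≤ 1) (hyx : ∑ j, y j ≤ x)
    (hyV : ∀ j, y j = 1 → j ∈ V) :
    (∏ j ∈ V, β j) / (Fintype.card ι)! * approxFactor x a y ≤ weightFactor x a β y := by
  have hβy := prod_le_prod_pow_of_le_one (fun j _ => hβ j) hy1 hyV
  have hfac : (0 : ℝ) < (Fintype.card ι)! := by positivity
  unfold weightFactor approxFactor
  split_ifs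
  · have hn : ∑ j, y j ≤ Fintype.card ι :=
      (sum_le_sum fun j _ => hy1 j).trans (by simp)
    have hpow : (x : ℝ) ^ (∑ j, y j) ≤ (Fintype.card ι)! * x.descFactorial (∑ j, y j) := by
      exact_mod_cast (pow_le_factorial_mul_descFactorial hyx).trans
        (Nat.mul_le_mul_right _ (factorial_le hn))
    rw [div_mul_eq_mul_div, div_le_iff₀ hfac, mul_pow]
    calc (∏ j ∈ V, β j) * ((x : ℝ) ^ (∑ j, y j) * a ^ (∑ j, y j))
        ≤ (∏ j, β j ^ y j) *
            ((Fintype.card ι)! * x.descFactorial (∑ j, y j) * a ^ (∑ j, y j)) := by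
          gcongr
          exact prod_nonneg fun j _ => pow_nonneg (hβ j).1 _
      _ = _ := by ring
  · rw [mul_one, div_le_one hfac]
    exact (hβy.trans (prod_pow_le_one hβ)).trans
      (by exact_mod_cast (Fintype.card ι).factorial_pos)

end ClassFactors

theorem csma_weight_uniform_approximation_general (K J : ℕ)
    (α : Fin K → ℝ) (hα : ∀ k, 0 < α k)
    (β : Fin K → Fin J → ℝ) (hβ01 : ∀ k j, 0 ≤ β k j ∧ β k j ≤ 1)
    -- accessible channels: those probed with positive probability
    (V : Fin K → Finset (Fin J))
    (hV : ∀ k j, j ∈ V k ↔ 0 < β k j)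
    (w u : (Fin K → ℕ) → (Fin K → Fin J → ℕ) → ℝ)
    (hw : ∀ x y, w x y = ∏ k, if 0 < x k then
      ((x k).descFactorial (∑ j, y k j) : ℝ) * α k ^ (∑ j, y k j) *
        ∏ j, β k j ^ y k j else 1)
    (hu : ∀ x y, u x y = ∏ k, if 0 < x k then
      ((x k : ℝ) * α k) ^ (∑ j, y k j) else 1) :
    ∃ m : ℝ, 0 < m ∧
      ∀ (x : Fin K → ℕ) (y : Fin K → Fin J → ℕ),
        (∀ k j, y k j ≤ 1) → (∀ k, (∑ j, y k j) ≤ x k) →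
        (∀ k j, y k j = 1 → j ∈ V k) →
        m * u x y ≤ w x y ∧ w x y ≤ u x y := by
  have hVpos (k : Fin K) : 0 < ∏ j ∈ V k, β k j := prod_pos fun j hj => (hV k j).1 hj
  refine ⟨∏ k, (∏ j ∈ V k, β k j) / (Fintype.card (Fin J))!,
    prod_pos fun k _ => div_pos (hVpos k) (by positivity), fun x y hy1 hyx hyV => ?_⟩
  have hw' : w x y = ∏ k, weightFactor (x k) (α k) (β k) (y k) := hw x y
  have hu' : u x y = ∏ k, approxFactor (x k) (α k) (y k) := hu x y
  rw [hw', hu', ← prod_mul_distrib]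
  exact ⟨prod_le_prod
      (fun k _ => mul_nonneg (div_nonneg (hVpos k).le (by positivity))
        (approxFactor_nonneg (hα k).le))
      fun k _ => mul_approxFactor_le_weightFactor (hα k).le (hβ01 k) (hy1 k) (hyx k) (hyV k),
    prod_le_prod (fun k _ => weightFactor_nonneg (hα k).le fun j => (hβ01 k j).1)
      fun k _ => weightFactor_le_approxFactor (hα k).le (hβ01 k)⟩

/-- Uniform weight approximation (Lemma 1, first part): there is a constant
`m > 0` such that `m·u(x,y) ≤ w(x,y) ≤ u(x,y)` for every state `x` and every
feasible schedule `y`, where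
`w(x,y) = ∏_{k:x_k>0} (x_k!/(x_k−y_k)!) α_k^{y_k} ∏_j β_{kj}^{y_{kj}}` and
`u(x,y) = ∏_{k:x_k>0} (x_k α_k)^{y_k}`. -/
theorem csma_weight_uniform_approximation (K J : ℕ) (hK : 0 < K) (hJ : 0 < J)
    (α : Fin K → ℝ) (hα : ∀ k, 0 < α k)
    (β : Fin K → Fin J → ℝ) (hβ01 : ∀ k j, 0 ≤ β k j ∧ β k j ≤ 1)
    (hβsum : ∀ k, ∑ j, β k j = 1)
    -- accessible channels: those probed with positive probability
    (V : Fin K → Finset (Fin J)) (hVne : ∀ k, (V k).Nonempty)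
    (hV : ∀ k j, j ∈ V k ↔ 0 < β k j)
    (w u : (Fin K → ℕ) → (Fin K → Fin J → ℕ) → ℝ)
    (hw : ∀ x y, w x y = ∏ k, if 0 < x k then
      ((x k).descFactorial (∑ j, y k j) : ℝ) * α k ^ (∑ j, y k j) *
        ∏ j, β k j ^ y k j else 1)
    (hu : ∀ x y, u x y = ∏ k, if 0 < x k then
      ((x k : ℝ) * α k) ^ (∑ j, y k j) else 1) :
    ∃ m : ℝ, 0 < m ∧
      ∀ (x : Fin K → ℕ) (y : Fin K → Fin J → ℕ),
        (∀ k j, y k j ≤ 1) → (∀ k, (∑ j, y k j) ≤ x k) →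
        (∀ k j, y k j = 1 → j ∈ V k) →
        m * u x y ≤ w x y ∧ w x y ≤ u x y :=
  csma_weight_uniform_approximation_general K J α hα β hβ01 V hV w u hw hu
end
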